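/- Let G be a finite group, S a Sylow p-subgroup, Q = O_p(G) the largest normal p-subgroup of G, and R = C_G(Q·C_S(Q)). Then G = C_G(Q) · N_G(R). -/

import Mathlib

/-!
`C_G(Q)` is normal because `Q` is, and `T = C_G(Q) ∩ S` is a Sylow `p`-subgroup of it, so the
Frattini argument gives `G = C_G(Q) · N_G(T)`. An element normalizing `T` normalizes `Q T`, hence
its centralizer `R`.
-/

open Pointwise Subgroup

namespace Subgroup

variable {G : Type*} [Group G]

theorem normalizer_le_normalizer_centralizer (s : Set G) :
    normalizer s ≤ normalizer (centralizer s : Set G) :=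
  le_normalizer_of_normal_subgroupOf (centralizer_le_normalizer s)

/-- `|K : H ∩ K| = |HK : H|`, which divides `|G : H|`. -/
theorem relIndex_dvd_index_of_normal_right (H K : Subgroup G) [K.Normal] [K.FiniteIndex] :
    H.relIndex K ∣ H.index := by
  obtain ⟨c, hc⟩ := relIndex_dvd_index_of_normal (H := K) (K := H)
  have hKH : K.relIndex H ≠ 0 := fun h ↦ K.index_ne_zero_of_finite (by rw [hc, h, zero_mul])
  have hindex : H.relIndex K * K.index = K.relIndex H * H.index := by
    have := relIndex_inf_mul_relIndex H K ⊤
    rwa [inf_top_eq, relIndex_top_right, relIndex_top_right,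
      ← relIndex_mul_index (inf_le_left : H ⊓ K ≤ H), inf_relIndex_left] at this
  refine ⟨c, mul_left_cancel₀ hKH ?_⟩
  rw [← hindex, hc]
  ring

end Subgroup

namespace Sylow

variable {p : ℕ} [Fact p.Prime] {G : Type*} [Group G] [Finite G]

noncomputable def subgroupOfNormal (P : Sylow p G) (N : Subgroup G) [N.Normal] : Sylow p N :=
  P.isPGroup'.comap_subtype.toSylow fun h ↦
    P.not_dvd_index (h.trans (relIndex_dvd_index_of_normal_right (P : Subgroup G) N))

theorem normalizer_inf_sup_eq_top (P : Sylow p G) (N : Subgroup G) [N.Normal] :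
    normalizer ((P ⊓ N : Subgroup G) : Set G) ⊔ N = ⊤ := by
  rw [← subgroupOf_map_subtype]
  exact normalizer_sup_eq_top (P.subgroupOfNormal N)

end Sylow

theorem centralizer_mul_normalizer_eq_univ_general
    {p : ℕ} [Fact p.Prime] {G : Type*} [Group G] [Finite G]
    (S : Sylow p G) (Q : Subgroup G)
    (hQnormal : Q.Normal)
    (R : Subgroup G)
    (hR : R = Subgroup.centralizer ((Q ⊔ (Subgroup.centralizer (Q : Set G) ⊓ S) : Subgroup G) : Set G)) :
    (Subgroup.centralizer (Q : Set G) : Set G) * (Subgroup.normalizer (R : Set G) : Set G) = Set.univ := by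
  set C := centralizer (Q : Set G)
  have hT : normalizer ((C ⊓ S : Subgroup G) : Set G) ≤ normalizer (R : Set G) := hR ▸
    (normalizer_le_normalizer_sup_of_normalizer_le_right le_normalizer_of_normal).trans
      (normalizer_le_normalizer_centralizer _)
  have hsup : C ⊔ normalizer (R : Set G) = ⊤ := by
    rw [eq_top_iff, ← S.normalizer_inf_sup_eq_top C, inf_comm, sup_comm]
    exact sup_le_sup_left hT C
  rw [← normal_mul, hsup, coe_top]

/-- Frattini-type factorization: if `G` is a finite group, `S` a Sylow `p`-subgroup,
`Q = O_p(G)` the largest normal `p`-subgroup of `G` and `R = C_G(Q·C_S(Q))`,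
then `G = C_G(Q) · N_G(R)`. -/
theorem centralizer_mul_normalizer_eq_univ
    {p : ℕ} [Fact p.Prime] {G : Type*} [Group G] [Finite G]
    (S : Sylow p G) (Q : Subgroup G)
    (hQnormal : Q.Normal) (hQp : IsPGroup p Q)
    (hQmax : ∀ N : Subgroup G, N.Normal → IsPGroup p N → N ≤ Q)
    (R : Subgroup G)
    (hR : R = Subgroup.centralizer ((Q ⊔ (Subgroup.centralizer (Q : Set G) ⊓ S) : Subgroup G) : Set G)) :
    (Subgroup.centralizer (Q : Set G) : Set G) * (Subgroup.normalizer (R : Set G) : Set G) = Set.univ :=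
  centralizer_mul_normalizer_eq_univ_general S Q hQnormal R hR
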